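/- arXiv:2107.06447 — 2 statements merged into one kernel-verified Lean document; each statement's English description precedes it below -/
import Mathlib

section
/- Let p be a nonzero Laurent polynomial in z₁,…,z_d over ℂ with lowest degree component h. Then for every n ∈ W, the polynomial r_n(z,λ̃) = λ̃ · z₁^{γ₁'}⋯z_d^{γ_d'} · h(μ_n⊙z) − z₁^{γ₁'}⋯z_d^{γ_d'} is irreducible in the polynomial ring ℂ[z₁,…,z_d,λ̃]. -/
open scoped BigOperators
open Complex

noncomputable section

/-- Laurent polynomials in `z₁,…,z_d` over `ℂ`, encoded as the group algebra of `ℤ^d`. -/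
abbrev LMv (d : ℕ) : Type := AddMonoidAlgebra ℂ (Fin d →₀ ℤ)

/-- Laurent polynomials in `z₁,…,z_d` and `λ` over `ℂ`. -/
abbrev LMvF (d : ℕ) : Type := AddMonoidAlgebra ℂ ((Fin d →₀ ℤ) × ℤ)

/-- `e^{2πin/q}`. -/
def muC (q : ℕ) (n : ℤ) : ℂ := Complex.exp (2 * Real.pi * Complex.I * n / q)

/-- The vector `μ_n = (e^{2πin₁/q₁},…,e^{2πin_d/q_d})`. -/
def muV {d : ℕ} (q : Fin d → ℕ) (n : Fin d → ℤ) : Fin d → ℂ := fun j => muC (q j) (n j)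

/-- Substitution `z_j ↦ c_j z_j` in a Laurent polynomial in `z`. -/
def scaleZ {d : ℕ} (c : Fin d → ℂ) (p : LMv d) : LMv d :=
  AddMonoidAlgebra.ofCoeff (Finsupp.sum p.coeff fun α a => Finsupp.single α ((∏ j, c j ^ (α j)) * a))

/-- Substitution `z_j ↦ c_j z_j` in a Laurent polynomial in `(z, λ)` (leaving `λ` alone). -/
def scaleZF {d : ℕ} (c : Fin d → ℂ) (P : LMvF d) : LMvF d :=
  AddMonoidAlgebra.ofCoeff (Finsupp.sum P.coeff fun β a => Finsupp.single β ((∏ j, c j ^ (β.1 j)) * a))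

/-- Total degree `α₁ + ⋯ + α_d` of a monomial exponent. -/
def degS {d : ℕ} (α : Fin d →₀ ℤ) : ℤ := ∑ j, α j

/-- `L₋`, the minimal total degree of a (nonzero) Laurent polynomial. -/
def lowDeg {d : ℕ} (p : LMv d) : ℤ := WithTop.untopD 0 ((Finsupp.support p.coeff).image degS).min

/-- The lowest degree component of a Laurent polynomial. -/
def lowComp {d : ℕ} (p : LMv d) : LMv d :=
  AddMonoidAlgebra.ofCoeff (Finsupp.filter (fun α => degS α = lowDeg p) p.coeff)

/-- The fundamental cell `W = {n ∈ ℤ^d : 0 ≤ n_j ≤ q_j - 1}`. -/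
def Wcell {d : ℕ} (q : Fin d → ℕ) : Finset (Fin d → ℤ) :=
  Fintype.piFinset fun j => (Finset.range (q j)).image (fun k : ℕ => (k : ℤ))

/-- The canonical embedding of Laurent polynomials in `z` into Laurent polynomials in `(z,λ)`. -/
def embedZ {d : ℕ} (p : LMv d) : LMvF d := AddMonoidAlgebra.ofCoeff (Finsupp.mapDomain (fun α => (α, (0:ℤ))) p.coeff)

/-- The variable `λ`. -/
def lamF (d : ℕ) : LMvF d := AddMonoidAlgebra.ofCoeff (Finsupp.single ((0 : Fin d →₀ ℤ), (1:ℤ)) (1:ℂ))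

/-- Exponent stretching `α ↦ (q₁α₁,…,q_dα_d)`. -/
def stretchE {d : ℕ} (q : Fin d → ℕ) (α : Fin d →₀ ℤ) : Fin d →₀ ℤ :=
  Finsupp.sum α fun j a => Finsupp.single j ((q j : ℤ) * a)

/-- The substitution `𝒫(w,λ) ↦ 𝒫(z₁^{q₁},…,z_d^{q_d},λ)`. -/
def stretchF {d : ℕ} (q : Fin d → ℕ) (P : LMvF d) : LMvF d :=
  AddMonoidAlgebra.ofCoeff (Finsupp.mapDomain (fun β => (stretchE q β.1, β.2)) P.coeff)

/-- Assumption (A₂): the Laurent polynomials `h(μ_n ⊙ z)`, `n ∈ W`, are pairwise distinct. -/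
def PairwiseDistinctH {d : ℕ} (q : Fin d → ℕ) (h : LMv d) : Prop :=
  ∀ n ∈ Wcell q, ∀ n' ∈ Wcell q, n ≠ n' → scaleZ (muV q n) h ≠ scaleZ (muV q n') h

/-- The polynomial `𝒫̃(z,λ) = ∏_{n∈W}(p(μ_n⊙z) − λ) + Σ_{X∈𝒮} C_X ∏_{n∈X}(p(μ_n⊙z) − λ)`. -/
def Ptilde {d : ℕ} (q : Fin d → ℕ) (p : LMv d)
    (S : Finset (Finset (Fin d → ℤ))) (C : Finset (Fin d → ℤ) → ℂ) : LMvF d :=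
  (∏ n ∈ Wcell q, (embedZ (scaleZ (muV q n) p) - lamF d))
    + ∑ X ∈ S, C X • ∏ n ∈ X, (embedZ (scaleZ (muV q n) p) - lamF d)
/-- The symbol `p(z) = Σ_n a_n z^{-n}` of a finite-range Toeplitz operator. -/
def symbA {d : ℕ} (a : (Fin d → ℤ) →₀ ℂ) : LMv d :=
  AddMonoidAlgebra.ofCoeff (Finsupp.sum a fun n c => Finsupp.single (-(Finsupp.equivFunOnFinite.symm n)) c)

/-- `V` is `q`-periodic. -/
def IsPeriodic {d : ℕ} (q : Fin d → ℕ) (V : (Fin d → ℤ) → ℂ) : Prop :=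
  ∀ (n : Fin d → ℤ) (j : Fin d), V (n + (q j : ℤ) • Pi.single j 1) = V n

/-- The discrete Fourier transform `V̂_ℓ = Q^{-1/2} Σ_{m∈W} e^{-2πi⟨m,ℓ⟩} V_m`. -/
def Vhat {d : ℕ} (q : Fin d → ℕ) (V : (Fin d → ℤ) → ℂ) (l : Fin d → ℝ) : ℂ :=
  ((1 / Real.sqrt (∏ j, (q j : ℝ)) : ℝ) : ℂ) *
    ∑ m ∈ Wcell q, Complex.exp (-(2 * Real.pi * Complex.I) *
      ((∑ j, (m j : ℝ) * l j : ℝ) : ℂ)) * V m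

/-- The diagonal matrix `D^z` with entries `p(μ_n ⊙ z)`, as Laurent polynomials. -/
def Dmat {d : ℕ} (q : Fin d → ℕ) (p : LMv d) :
    Matrix {n // n ∈ Wcell q} {n // n ∈ Wcell q} (LMvF d) :=
  Matrix.diagonal fun n => embedZ (scaleZ (muV q n.1) p)

/-- The constant matrix `B` with entries `V̂((n-n')/q)`. -/
def Bmat {d : ℕ} (q : Fin d → ℕ) (V : (Fin d → ℤ) → ℂ) :
    Matrix {n // n ∈ Wcell q} {n // n ∈ Wcell q} (LMvF d) :=
  fun n n' => AddMonoidAlgebra.ofCoeff (Finsupp.single ((0 : Fin d →₀ ℤ), (0:ℤ))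
    (Vhat q V fun j => ((n.1 j - n'.1 j : ℤ) : ℝ) / (q j : ℝ)))

/-- `det(D^z + B - λI)`, a Laurent polynomial in `z` and `λ`. -/
def detLaur {d : ℕ} (q : Fin d → ℕ) (p : LMv d) (V : (Fin d → ℤ) → ℂ) : LMvF d :=
  Matrix.det (Dmat q p + Bmat q V - Matrix.diagonal fun _ => lamF d)
/-- Ordinary polynomials in `z₁,…,z_d` and `λ̃` (the extra `Unit` variable is `λ̃`). -/
abbrev MvP (d : ℕ) : Type := MvPolynomial (Fin d ⊕ Unit) ℂ

/-- Conversion of a Laurent polynomial in `(z,λ)` with nonnegative exponents into an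
ordinary polynomial in `ℂ[z₁,…,z_d,λ̃]` (negative exponents are truncated). -/
def toMvP {d : ℕ} (P : LMvF d) : MvP d :=
  Finsupp.sum P.coeff fun β c =>
    MvPolynomial.monomial
      (Finsupp.equivFunOnFinite.symm
        (Sum.elim (fun j => (β.1 j).toNat) (fun _ => β.2.toNat))) c

/-- `γ_j(p)`: minus the lowest exponent of `z_j` in `p` if that exponent is negative,
and `0` otherwise. -/
def gammaV {d : ℕ} (p : LMv d) (j : Fin d) : ℤ :=
  max 0 (-(WithTop.untopD 0 ((Finsupp.support p.coeff).image fun α => α j).min))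

/-- The exponent vector `γ' = (γ₁',…,γ_d')` computed from the lowest degree component of `p`. -/
def gammaE' {d : ℕ} (p : LMv d) : Fin d →₀ ℤ :=
  Finsupp.equivFunOnFinite.symm fun j => gammaV (lowComp p) j

/-- The polynomial `r_n(z,λ̃) = λ̃ z^{γ'} h(μ_n⊙z) − z^{γ'} ∈ ℂ[z,λ̃]`. -/
def rPoly {d : ℕ} (q : Fin d → ℕ) (p : LMv d) (n : Fin d → ℤ) : MvP d :=
  MvPolynomial.X (Sum.inr ()) *
      toMvP ((AddMonoidAlgebra.single (gammaE' p, (0:ℤ)) (1:ℂ) : LMvF d) * embedZ (scaleZ (muV q n) (lowComp p)))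
    - toMvP (AddMonoidAlgebra.ofCoeff (Finsupp.single (gammaE' p, (0:ℤ)) (1:ℂ)))

/-- Substitution `w_j ↦ z_j^{q_j}` (fixing `λ̃`) on ordinary polynomials. -/
def stretchMv {d : ℕ} (q : Fin d → ℕ) : MvP d →ₐ[ℂ] MvP d :=
  MvPolynomial.aeval
    (Sum.elim (fun j => MvPolynomial.X (Sum.inl j) ^ q j)
      (fun _ => MvPolynomial.X (Sum.inr ())))

/-- Substitution `z_j ↦ c_j z_j` (fixing `λ̃`) on ordinary polynomials. -/
def scaleMv {d : ℕ} (c : Fin d → ℂ) : MvP d →ₐ[ℂ] MvP d :=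
  MvPolynomial.aeval
    (Sum.elim (fun j => MvPolynomial.C (c j) * MvPolynomial.X (Sum.inl j))
      (fun _ => MvPolynomial.X (Sum.inr ())))

/-- `ã(z,λ̃) = ∏_{n∈W} r_n(z,λ̃)`. -/
def atilde {d : ℕ} (q : Fin d → ℕ) (p : LMv d) : MvP d := ∏ n ∈ Wcell q, rPoly q p n

/-- Substitution `λ ↦ λ̃⁻¹` on Laurent polynomials in `(z,λ)`. -/
def invLam {d : ℕ} (P : LMvF d) : LMvF d :=
  AddMonoidAlgebra.ofCoeff (Finsupp.mapDomain (fun β : (Fin d →₀ ℤ) × ℤ => (β.1, -β.2)) P.coeff)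

/-- The exponent vector `(γ₁ Q/q₁, …, γ_d Q/q_d)` computed from `p`. -/
def gammaQE {d : ℕ} (q : Fin d → ℕ) (p : LMv d) : Fin d →₀ ℤ :=
  Finsupp.equivFunOnFinite.symm fun j => gammaV p j * (((∏ i, q i) / q j : ℕ) : ℤ)

/-- `ℛ(w,λ̃) = λ̃^Q w₁^{γ₁Q/q₁}⋯w_d^{γ_dQ/q_d} 𝒫(w,λ̃⁻¹)`. -/
def Rcal {d : ℕ} (q : Fin d → ℕ) (p : LMv d) (P : LMvF d) : LMvF d :=
  (AddMonoidAlgebra.single (gammaQE q p, ((∏ j, q j : ℕ) : ℤ)) (1:ℂ) : LMvF d) * invLam P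
/-- Reduction of `v ∈ ℤ^d` modulo the lattice `q₁ℤ ⊕ ⋯ ⊕ q_dℤ` into `W`. -/
def modW {d : ℕ} (q : Fin d → ℕ) (hq : ∀ j, 1 ≤ q j) (v : Fin d → ℤ) :
    {x // x ∈ Wcell q} :=
  ⟨fun j => v j % (q j : ℤ), by
    simp only [Wcell, Fintype.mem_piFinset, Finset.mem_image, Finset.mem_range]
    intro j
    have h1 : (0:ℤ) < (q j : ℤ) := by exact_mod_cast hq j
    have h2 : v j % (q j : ℤ) < (q j : ℤ) := Int.emod_lt_of_pos _ h1
    have h3 : (0:ℤ) ≤ v j % (q j : ℤ) := Int.emod_nonneg _ (by omega)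
    exact ⟨(v j % (q j : ℤ)).toNat, by omega, by omega⟩⟩

/-- The extension `u^x` of `u : ℂ^W` to `ℤ^d` satisfying `u^x_{n+m⊙q} = e^{2πi⟨m⊙q,x⟩}u_n`. -/
def extFn {d : ℕ} (q : Fin d → ℕ) (hq : ∀ j, 1 ≤ q j) (x : Fin d → ℝ)
    (u : {n // n ∈ Wcell q} → ℂ) (v : Fin d → ℤ) : ℂ :=
  Complex.exp (2 * Real.pi * Complex.I *
      ∑ j, ((((v j / (q j : ℤ)) * (q j : ℤ) : ℤ) : ℂ) * ((x j : ℝ) : ℂ))) *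
    u (modW q hq v)

/-- The Floquet restriction `H̃(x)` of `H = A + V` to `ℂ^W`. -/
def HtildeFn {d : ℕ} (q : Fin d → ℕ) (hq : ∀ j, 1 ≤ q j) (x : Fin d → ℝ)
    (a : (Fin d → ℤ) →₀ ℂ) (V : (Fin d → ℤ) → ℂ)
    (u : {n // n ∈ Wcell q} → ℂ) : {n // n ∈ Wcell q} → ℂ :=
  fun m => (Finsupp.sum a fun k c => c * extFn q hq x u (fun j => m.1 j - k j)) + V m.1 * u m

/-- The matrix of `H̃(x)` in the standard basis of `ℂ^W`. -/
def Hmat {d : ℕ} (q : Fin d → ℕ) (hq : ∀ j, 1 ≤ q j) (x : Fin d → ℝ)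
    (a : (Fin d → ℤ) →₀ ℂ) (V : (Fin d → ℤ) → ℂ) :
    Matrix {n // n ∈ Wcell q} {n // n ∈ Wcell q} ℂ :=
  fun m n => HtildeFn q hq x a V (Pi.single n 1) m

/-- The Floquet–Bloch transform matrix `ℱ^x`. -/
def Fmat {d : ℕ} (q : Fin d → ℕ) (x : Fin d → ℝ) :
    Matrix {n // n ∈ Wcell q} {n // n ∈ Wcell q} ℂ :=
  fun l n => ((1 / Real.sqrt (∏ j, (q j : ℝ)) : ℝ) : ℂ) *
    Complex.exp (-(2 * Real.pi * Complex.I) *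
      ∑ j, ((((l.1 j : ℝ) / (q j : ℝ) + x j : ℝ) : ℂ) * ((n.1 j : ℤ) : ℂ)))

/-- Numerical evaluation of the symbol `p(z) = Σ_n a_n z^{-n}`. -/
def pEvalN {d : ℕ} (a : (Fin d → ℤ) →₀ ℂ) (z : Fin d → ℂ) : ℂ :=
  Finsupp.sum a fun n c => c * ∏ j, z j ^ (-(n j))

/-- The numerical diagonal matrix `D^z`, `z = e^{2πix}`, with entries `p(μ_n ⊙ z)`. -/
def DmatN {d : ℕ} (q : Fin d → ℕ) (x : Fin d → ℝ) (a : (Fin d → ℤ) →₀ ℂ) :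
    Matrix {n // n ∈ Wcell q} {n // n ∈ Wcell q} ℂ :=
  Matrix.diagonal fun n => pEvalN a fun j =>
    muC (q j) (n.1 j) * Complex.exp (2 * Real.pi * Complex.I * ((x j : ℝ) : ℂ))

/-- The numerical matrix `B`. -/
def BmatN {d : ℕ} (q : Fin d → ℕ) (V : (Fin d → ℤ) → ℂ) :
    Matrix {n // n ∈ Wcell q} {n // n ∈ Wcell q} ℂ :=
  fun n n' => Vhat q V fun j => ((n.1 j - n'.1 j : ℤ) : ℝ) / (q j : ℝ)

/-- The symbol of the discrete Laplacian: `p(z) = -(Σ_j z_j + z_j⁻¹)`. -/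
def pLap (d : ℕ) : LMv d :=
  - ∑ j : Fin d, ((AddMonoidAlgebra.single (Finsupp.single j (1:ℤ)) (1:ℂ) : LMv d)
      + (AddMonoidAlgebra.single (Finsupp.single j (-1:ℤ)) (1:ℂ) : LMv d))

/-- The exponent vector `(a, b) ∈ ℤ²`. -/
def ee2 (a b : ℤ) : Fin 2 →₀ ℤ := Finsupp.single 0 a + Finsupp.single 1 b

/-- The monomial `z₁^a z₂^b`. -/
def mono2 (a b : ℤ) : LMv 2 := AddMonoidAlgebra.single (ee2 a b) (1:ℂ)

/-- The symbol of the extended Harper lattice Laplacian. -/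
def pEHM : LMv 2 :=
  -(mono2 1 0 + mono2 (-1) 0 + mono2 0 1 + mono2 0 (-1)
    + mono2 1 (-1) + mono2 (-1) 1 + mono2 1 1 + mono2 (-1) (-1))

/-- The symbol of the (sheared) triangular lattice Laplacian. -/
def pTri : LMv 2 :=
  -(mono2 1 0 + mono2 (-1) 0 + mono2 0 1 + mono2 0 (-1) + mono2 1 (-1) + mono2 (-1) 1)

/-!
In the variables `z`, `r_n = λ̃ A - B` is a polynomial of degree one in `λ̃` over the UFD `ℂ[z]`,
with `A = z^{γ'} h(μ_n ⊙ z)` and `B = z^{γ'}`, so it is irreducible as soon as `A ≠ 0` and `A`, `B`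
are coprime. As `B` is a monomial, coprimality means that no `z_j` with `γ'_j > 0` divides `A`;
this holds because `γ'_j` is chosen so that some monomial of `h`, hence of `h(μ_n ⊙ z)`, has
`z_j`-exponent exactly `-γ'_j`, which becomes a monomial of `A` free of `z_j`.
-/

open MvPolynomial

namespace MvPolynomial

variable {σ R : Type*} [CommRing R] [IsDomain R]

theorem isRelPrime_monomial_one_of_not_X_dvd [UniqueFactorizationMonoid R]
    {a : MvPolynomial σ R} {m : σ →₀ ℕ} (h : ∀ j ∈ m.support, ¬ X j ∣ a) :
    IsRelPrime a (monomial m 1) := by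
  rw [← prod_X_pow_eq_monomial]
  exact IsRelPrime.prod_right fun j hj =>
    ((X_prime.irreducible.isRelPrime_iff_not_dvd.mpr (h j hj)).symm).pow_right

theorem irreducible_X_inr_mul_rename_sub_rename {a b : MvPolynomial σ R} (ha : a ≠ 0)
    (hab : IsRelPrime a b) :
    Irreducible (X (Sum.inr ()) * rename Sum.inl a - rename Sum.inl b :
      MvPolynomial (σ ⊕ Unit) R) := by
  let e := (renameEquiv R (Equiv.optionEquivSumPUnit σ).symm).trans (optionEquivLeft R σ)
  have he_X : e (X (Sum.inr ())) = Polynomial.X := by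
    simp [e, Equiv.optionEquivSumPUnit]
  have he_rename (f : MvPolynomial σ R) : e (rename Sum.inl f) = Polynomial.C f := by
    induction f using MvPolynomial.induction_on with
    | C r => simp [e]
    | add f g hf hg => simp only [map_add, hf, hg]
    | mul_X f i hf =>
      rw [map_mul, map_mul, hf, rename_X, Polynomial.C_mul]
      simp [e, Equiv.optionEquivSumPUnit]
  rw [← MulEquiv.irreducible_iff e, map_sub, map_mul, he_X, he_rename, he_rename,
    sub_eq_add_neg, ← map_neg, mul_comm]
  exact Polynomial.irreducible_C_mul_X_add_C ha hab.neg_right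

end MvPolynomial

open AddMonoidAlgebra (single)

section Laurent

variable {d : ℕ}

lemma coeff_scaleZ (c : Fin d → ℂ) (f : LMv d) (α : Fin d →₀ ℤ) :
    (scaleZ c f).coeff α = (∏ j, c j ^ α j) * f.coeff α := by
  classical
  rw [scaleZ, AddMonoidAlgebra.coeff_ofCoeff, Finsupp.sum_apply, Finsupp.sum]
  simp only [Finsupp.single_apply]
  rw [Finset.sum_ite_eq']
  split_ifs with hα
  · rfl
  · rw [Finsupp.notMem_support_iff.mp hα, mul_zero]

lemma support_scaleZ {c : Fin d → ℂ} (hc : ∀ j, c j ≠ 0) (f : LMv d) :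
    (scaleZ c f).coeff.support = f.coeff.support := by
  ext α
  simp only [Finsupp.mem_support_iff, coeff_scaleZ, mul_ne_zero_iff, ne_eq,
    Finset.prod_ne_zero_iff, Finset.mem_univ, forall_const]
  exact and_iff_right fun j => zpow_ne_zero _ (hc j)

lemma scaleZ_ne_zero {c : Fin d → ℂ} (hc : ∀ j, c j ≠ 0) {f : LMv d} (hf : f ≠ 0) :
    scaleZ c f ≠ 0 := by
  rwa [Ne, ← AddMonoidAlgebra.coeff_eq_zero, ← Finsupp.support_eq_empty, support_scaleZ hc,
    Finsupp.support_eq_empty, AddMonoidAlgebra.coeff_eq_zero]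

lemma muV_ne_zero (q : Fin d → ℕ) (n : Fin d → ℤ) (j : Fin d) : muV q n j ≠ 0 :=
  Complex.exp_ne_zero _

lemma lowComp_ne_zero {p : LMv d} (hp : p ≠ 0) : lowComp p ≠ 0 := by
  have hdeg : (p.coeff.support.image degS).Nonempty :=
    (Finsupp.support_nonempty_iff.mpr (mt AddMonoidAlgebra.coeff_eq_zero.mp hp)).image _
  obtain ⟨α, hα, hαdeg⟩ := Finset.mem_image.mp (Finset.min'_mem _ hdeg)
  have hlow : degS α = lowDeg p := by
    rw [lowDeg, ← Finset.coe_min' hdeg, WithTop.untopD_coe, hαdeg]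
  intro h0
  have hcoeff : (lowComp p).coeff α = p.coeff α := Finsupp.filter_apply_pos _ _ hlow
  rw [h0] at hcoeff
  exact Finsupp.mem_support_iff.mp hα hcoeff.symm

end Laurent

section Gamma

variable {d : ℕ}

lemma gammaV_eq_max_neg_min' (f : LMv d) (j : Fin d)
    (hf : (f.coeff.support.image fun α => α j).Nonempty) :
    gammaV f j = max 0 (-(f.coeff.support.image fun α => α j).min' hf) := by
  rw [gammaV, ← Finset.coe_min' hf, WithTop.untopD_coe]

lemma gammaV_add_nonneg {f : LMv d} {α : Fin d →₀ ℤ} (hα : α ∈ f.coeff.support) (j : Fin d) :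
    0 ≤ gammaV f j + α j := by
  have hf : (f.coeff.support.image fun α => α j).Nonempty := ⟨_, Finset.mem_image_of_mem _ hα⟩
  have hmin := Finset.min'_le _ _ (Finset.mem_image_of_mem (fun α => α j) hα)
  rw [gammaV_eq_max_neg_min' f j hf]
  omega

lemma exists_gammaV_add_eq_zero {f : LMv d} {j : Fin d} (hj : 0 < gammaV f j) :
    ∃ α ∈ f.coeff.support, gammaV f j + α j = 0 := by
  have hf : (f.coeff.support.image fun α => α j).Nonempty := by
    by_contra hempty
    rw [Finset.not_nonempty_iff_eq_empty] at hempty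
    simp [gammaV, hempty] at hj
  obtain ⟨α, hα, hαj⟩ := Finset.mem_image.mp (Finset.min'_mem _ hf)
  refine ⟨α, hα, ?_⟩
  rw [gammaV_eq_max_neg_min' f j hf] at hj ⊢
  omega

lemma gammaV_scaleZ {c : Fin d → ℂ} (hc : ∀ j, c j ≠ 0) (f : LMv d) :
    gammaV (scaleZ c f) = gammaV f := by
  ext j
  rw [gammaV, gammaV, support_scaleZ hc]

end Gamma

section ToMvPolynomial

variable {d : ℕ}

/-- The polynomial with the coefficients of `f`, negative exponents being truncated to `0`. -/
def toMvPolynomial (f : LMv d) : MvPolynomial (Fin d) ℂ :=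
  f.coeff.sum fun α c => monomial (α.mapRange Int.toNat Int.toNat_zero) c

lemma embedZ_mul (f g : LMv d) : embedZ (f * g) = embedZ f * embedZ g :=
  AddMonoidAlgebra.mapDomain_mul (AddMonoidHom.inl (Fin d →₀ ℤ) ℤ) f g

lemma embedZ_single (α : Fin d →₀ ℤ) (c : ℂ) : embedZ (single α c) = single (α, 0) c :=
  AddMonoidAlgebra.mapDomain_single

lemma toMvP_embedZ (f : LMv d) : toMvP (embedZ f) = rename Sum.inl (toMvPolynomial f) := by
  classical
  rw [toMvP, embedZ, AddMonoidAlgebra.coeff_ofCoeff,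
    Finsupp.sum_mapDomain_index (fun _ => by simp) (fun _ _ _ => by rw [map_add]),
    toMvPolynomial, map_finsuppSum]
  refine Finsupp.sum_congr fun α _ => ?_
  rw [rename_monomial]
  refine congrArg (fun m => monomial m _) ?_
  ext (j | u)
  · simp [Finsupp.mapDomain_apply Sum.inl_injective]
  · simp [Finsupp.mapDomain_of_notMem_range]

lemma toMvPolynomial_single (α : Fin d →₀ ℤ) (c : ℂ) :
    toMvPolynomial (single α c : LMv d) = monomial (α.mapRange Int.toNat Int.toNat_zero) c := by
  rw [toMvPolynomial, AddMonoidAlgebra.coeff_single,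
    Finsupp.sum_single_index (by rw [map_zero])]

lemma coeff_toMvPolynomial {f : LMv d} (hf : ∀ β ∈ f.coeff.support, 0 ≤ β)
    {α : Fin d →₀ ℤ} (hα : 0 ≤ α) :
    coeff (α.mapRange Int.toNat Int.toNat_zero) (toMvPolynomial f) = f.coeff α := by
  classical
  have hinj : ∀ β ∈ f.coeff.support, β.mapRange Int.toNat Int.toNat_zero =
      α.mapRange Int.toNat Int.toNat_zero → β = α := fun β hβ hβα => by
    ext j
    have hj := DFunLike.congr_fun hβα j
    rw [Finsupp.mapRange_apply, Finsupp.mapRange_apply] at hj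
    rw [← Int.toNat_of_nonneg (hf β hβ j), hj, Int.toNat_of_nonneg (hα j)]
  rw [toMvPolynomial, Finsupp.sum, coeff_sum]
  simp only [coeff_monomial]
  rw [Finset.sum_eq_single α (fun β hβ hne => if_neg fun h => hne (hinj β hβ h))
    (fun hα => by rw [if_pos rfl, Finsupp.notMem_support_iff.mp hα]), if_pos rfl]

lemma toMvPolynomial_ne_zero {f : LMv d} (hf0 : f ≠ 0)
    (hf : ∀ β ∈ f.coeff.support, 0 ≤ β) : toMvPolynomial f ≠ 0 := by
  obtain ⟨α, hα⟩ := Finsupp.support_nonempty_iff.mpr (mt AddMonoidAlgebra.coeff_eq_zero.mp hf0)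
  intro h0
  have := coeff_toMvPolynomial hf (hf α hα)
  rw [h0, coeff_zero] at this
  exact Finsupp.mem_support_iff.mp hα this.symm

lemma not_X_dvd_toMvPolynomial {f : LMv d} (hf : ∀ β ∈ f.coeff.support, 0 ≤ β)
    {α : Fin d →₀ ℤ} (hα : α ∈ f.coeff.support) {j : Fin d} (hαj : α j = 0) :
    ¬ X j ∣ toMvPolynomial f := by
  classical
  rintro ⟨g, hg⟩
  have := coeff_toMvPolynomial hf (hf α hα)
  rw [hg, coeff_X_mul', if_neg (by simp [hαj])] at this
  exact Finsupp.mem_support_iff.mp hα this.symm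

end ToMvPolynomial

section ClearingDenominators

variable {d : ℕ} {f : LMv d} {γ : Fin d →₀ ℤ}

lemma nonneg_of_mem_support_single_gammaV_mul (hγ : ∀ j, γ j = gammaV f j) {β : Fin d →₀ ℤ}
    (hβ : β ∈ (single γ 1 * f).coeff.support) : 0 ≤ β := by
  rw [AddMonoidAlgebra.support_coeff_single_mul _ _ (by simp)] at hβ
  obtain ⟨α, hα, rfl⟩ := Finset.mem_map.mp hβ
  intro j
  simpa [hγ] using gammaV_add_nonneg hα j

lemma not_X_dvd_toMvPolynomial_single_gammaV_mul (hγ : ∀ j, γ j = gammaV f j) {j : Fin d}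
    (hj : 0 < γ j) : ¬ X j ∣ toMvPolynomial (single γ 1 * f) := by
  obtain ⟨α, hα, hαj⟩ := exists_gammaV_add_eq_zero (hγ j ▸ hj)
  refine not_X_dvd_toMvPolynomial (fun _ => nonneg_of_mem_support_single_gammaV_mul hγ)
    (α := γ + α) ?_ (by simp [hγ, hαj])
  rw [Finsupp.mem_support_iff, AddMonoidAlgebra.coeff_single_mul_add, one_mul]
  exact Finsupp.mem_support_iff.mp hα

lemma isRelPrime_toMvPolynomial_single_gammaV_mul (hγ : ∀ j, γ j = gammaV f j) :
    IsRelPrime (toMvPolynomial (single γ 1 * f)) (toMvPolynomial (single γ 1)) := by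
  rw [toMvPolynomial_single]
  refine isRelPrime_monomial_one_of_not_X_dvd fun j hj => ?_
  refine not_X_dvd_toMvPolynomial_single_gammaV_mul hγ ?_
  rw [Finsupp.mem_support_iff, Finsupp.mapRange_apply] at hj
  omega

end ClearingDenominators

lemma rPoly_eq {d : ℕ} (q : Fin d → ℕ) (p : LMv d) (n : Fin d → ℤ) :
    rPoly q p n = X (Sum.inr ()) *
        rename Sum.inl (toMvPolynomial (single (gammaE' p) 1 * scaleZ (muV q n) (lowComp p)))
      - rename Sum.inl (toMvPolynomial (single (gammaE' p) 1)) := by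
  rw [rPoly, ← embedZ_single, ← embedZ_mul, toMvP_embedZ, ← toMvP_embedZ (single _ 1),
    embedZ_single]
  rfl

theorem stmt6_general {d : ℕ} (q : Fin d → ℕ)
    (p : LMv d) (hp : p ≠ 0) :
    ∀ n ∈ Wcell q, Irreducible (rPoly q p n) := by
  intro n _
  set s := scaleZ (muV q n) (lowComp p)
  have hγ : ∀ j, gammaE' p j = gammaV s j := fun j => by
    rw [gammaV_scaleZ (muV_ne_zero q n)]
    rfl
  have hs : single (gammaE' p) 1 * s ≠ 0 :=
    mul_ne_zero (by simp) (scaleZ_ne_zero (muV_ne_zero q n) (lowComp_ne_zero hp))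
  rw [rPoly_eq]
  exact irreducible_X_inr_mul_rename_sub_rename
    (toMvPolynomial_ne_zero hs fun _ => nonneg_of_mem_support_single_gammaV_mul hγ)
    (isRelPrime_toMvPolynomial_single_gammaV_mul hγ)

theorem stmt6 {d : ℕ} (hd : 1 ≤ d) (q : Fin d → ℕ) (hq : ∀ j, 1 ≤ q j)
    (p : LMv d) (hp : p ≠ 0) :
    ∀ n ∈ Wcell q, Irreducible (rPoly q p n) :=
  stmt6_general q p hp
end
end

section
/- Let p(z₁,z₂) = −(z₁ + 1/z₁ + z₂ + 1/z₂ + z₁/z₂ + z₂/z₁ + z₁z₂ + 1/(z₁z₂)) (the symbol of the extended Harper lattice Laplacian). Then the lowest degree component of p is h(z) = −1/(z₁z₂), which has degree −2 < 0; moreover, if gcd(q₁,q₂) = 1, then the Laurent polynomials h(μ_n⊙z), n ∈ W, are pairwise distinct. Hence, for coprime periods q₁, q₂, p satisfies Assumptions (A₁) and (A₂). -/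
/-!
Every exponent `α` of `pEHM` has `α₁, α₂ ≥ -1`, so `z₁⁻¹z₂⁻¹` is its only monomial of the
minimal total degree `-2`. Scaling by `μ_n` multiplies that monomial by `(μ_{n₁} μ_{n₂})⁻¹`, where
`μ_{n₁} μ_{n₂} = e^{2πi (n₁q₂ + n₂q₁)/(q₁q₂)}`. For coprime `q₁, q₂` the residue of `n₁q₂ + n₂q₁`
modulo `q₁q₂` determines `n₁` modulo `q₁` and `n₂` modulo `q₂`, hence determines `n ∈ W`.
-/

open scoped BigOperators
open Complex

noncomputable section

section LowestDegree

variable {d : ℕ} {p : LMv d} {α₀ : Fin d →₀ ℤ}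

theorem lowDeg_eq_degS (h₀ : α₀ ∈ p.coeff.support)
    (hle : ∀ α ∈ p.coeff.support, degS α₀ ≤ degS α) : lowDeg p = degS α₀ := by
  have hmin : (p.coeff.support.image degS).min = degS α₀ :=
    le_antisymm (Finset.min_le (Finset.mem_image_of_mem _ h₀)) <|
      Finset.le_min fun _ hb => by
        obtain ⟨α, hα, rfl⟩ := Finset.mem_image.1 hb
        exact WithTop.coe_le_coe.2 (hle α hα)
  rw [lowDeg, hmin]
  rfl

theorem lowComp_eq_single (h₀ : α₀ ∈ p.coeff.support)
    (hlt : ∀ α ∈ p.coeff.support, α ≠ α₀ → degS α₀ < degS α) :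
    lowComp p = AddMonoidAlgebra.single α₀ (p.coeff α₀) := by
  have hdeg : lowDeg p = degS α₀ := lowDeg_eq_degS h₀ fun α hα =>
    (eq_or_ne α α₀).elim (fun h => h ▸ le_rfl) fun h => (hlt α hα h).le
  ext α
  rw [lowComp, AddMonoidAlgebra.coeff_ofCoeff, hdeg, Finsupp.filter_apply,
    AddMonoidAlgebra.coeff_single, Finsupp.single_apply]
  by_cases hα : α = α₀
  · simp [hα]
  · rw [if_neg (Ne.symm hα)]
    split_ifs with hd
    · by_contra hne
      exact (hlt α (Finsupp.mem_support_iff.2 hne) hα).ne hd.symm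
    · rfl

end LowestDegree

theorem scaleZ_single {d : ℕ} (c : Fin d → ℂ) (α : Fin d →₀ ℤ) (v : ℂ) :
    scaleZ c (AddMonoidAlgebra.single α v) =
      AddMonoidAlgebra.single α ((∏ j, c j ^ α j) * v) := by
  rw [scaleZ, AddMonoidAlgebra.coeff_single, Finsupp.sum_single_index (by simp)]
  rfl

theorem mem_Wcell_iff {d : ℕ} {q : Fin d → ℕ} {n : Fin d → ℤ} :
    n ∈ Wcell q ↔ ∀ j, n j ∈ Set.Ico 0 (q j : ℤ) := by
  simp only [Wcell, Fintype.mem_piFinset, Finset.mem_image, Finset.mem_range, Set.mem_Ico]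
  refine forall_congr' fun j => ⟨?_, fun h => ⟨(n j).toNat, by omega, by omega⟩⟩
  rintro ⟨k, hk, hkn⟩
  omega

theorem Int.modEq_of_mul_add_mul_modEq {q₁ q₂ : ℕ} (hco : Nat.Coprime q₁ q₂) {a b a' b' : ℤ}
    (h : a * q₂ + b * q₁ ≡ a' * q₂ + b' * q₁ [ZMOD (q₁ * q₂ : ℕ)]) : a ≡ a' [ZMOD q₁] := by
  have hcop : IsCoprime (q₁ : ℤ) q₂ := Nat.isCoprime_iff_coprime.2 hco
  rw [Int.modEq_iff_dvd] at h ⊢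
  have hdvd : (q₁ : ℤ) ∣ (a' - a) * q₂ := by
    have := (Int.natCast_dvd_natCast.2 (Nat.dvd_mul_right q₁ q₂)).trans h
    rw [show a' * q₂ + b' * q₁ - (a * q₂ + b * q₁) = (a' - a) * q₂ + (b' - b) * q₁ by ring] at this
    exact (dvd_add_left (dvd_mul_left _ _)).1 this
  exact hcop.dvd_of_dvd_mul_right hdvd

theorem Int.ModEq.eq_of_mem_Ico {m a b : ℤ} (h : a ≡ b [ZMOD m])
    (ha : a ∈ Set.Ico 0 m) (hb : b ∈ Set.Ico 0 m) : a = b := by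
  rwa [Int.ModEq, Int.emod_eq_of_lt ha.1 ha.2, Int.emod_eq_of_lt hb.1 hb.2] at h

theorem muC_eq_zpow (Q : ℕ) (a : ℤ) : muC Q a = Complex.exp (2 * Real.pi * Complex.I / Q) ^ a := by
  rw [muC, ← Complex.exp_int_mul]
  ring_nf

theorem muC_eq_muC_iff {Q : ℕ} (hQ : Q ≠ 0) {a b : ℤ} : muC Q a = muC Q b ↔ a ≡ b [ZMOD Q] := by
  have hζ := Complex.isPrimitiveRoot_exp Q hQ
  have hζ0 : Complex.exp (2 * Real.pi * Complex.I / Q) ≠ 0 := Complex.exp_ne_zero _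
  rw [muC_eq_zpow, muC_eq_zpow, Int.modEq_comm, Int.modEq_iff_dvd, ← hζ.zpow_eq_one_iff_dvd,
    zpow_sub₀ hζ0, div_eq_one_iff_eq (zpow_ne_zero _ hζ0), eq_comm]

theorem muC_mul_muC {q₁ q₂ : ℕ} (h₁ : q₁ ≠ 0) (h₂ : q₂ ≠ 0) (a b : ℤ) :
    muC q₁ a * muC q₂ b = muC (q₁ * q₂) (a * q₂ + b * q₁) := by
  rw [muC, muC, muC, ← Complex.exp_add]
  congr 1
  push_cast
  field_simp

theorem muC_mul_muC_injOn_Wcell {q : Fin 2 → ℕ} (hco : Nat.Coprime (q 0) (q 1))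
    {n n' : Fin 2 → ℤ} (hn : n ∈ Wcell q) (hn' : n' ∈ Wcell q)
    (h : muC (q 0) (n 0) * muC (q 1) (n 1) = muC (q 0) (n' 0) * muC (q 1) (n' 1)) : n = n' := by
  rw [mem_Wcell_iff] at hn hn'
  have hq : ∀ j, q j ≠ 0 := fun j => by
    have := (hn j).1.trans_lt (hn j).2
    omega
  rw [muC_mul_muC (hq 0) (hq 1), muC_mul_muC (hq 0) (hq 1),
    muC_eq_muC_iff (mul_ne_zero (hq 0) (hq 1))] at h
  have h₀ := Int.modEq_of_mul_add_mul_modEq hco h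
  have h₁ := Int.modEq_of_mul_add_mul_modEq hco.symm <| by
    simpa only [mul_comm (q 1), add_comm] using h
  ext j
  fin_cases j
  · exact h₀.eq_of_mem_Ico (hn 0) (hn' 0)
  · exact h₁.eq_of_mem_Ico (hn 1) (hn' 1)

@[simp] theorem ee2_apply_zero (a b : ℤ) : ee2 a b 0 = a := by simp [ee2]

@[simp] theorem ee2_apply_one (a b : ℤ) : ee2 a b 1 = b := by simp [ee2]

theorem ee2_eq_ee2_iff {a b a' b' : ℤ} : ee2 a b = ee2 a' b' ↔ a = a' ∧ b = b' := by
  refine ⟨fun h => ⟨by simpa using DFunLike.congr_fun h 0, by simpa using DFunLike.congr_fun h 1⟩, ?_⟩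
  rintro ⟨rfl, rfl⟩
  rfl

theorem coeff_pEHM_mem_supported :
    pEHM.coeff ∈ Finsupp.supported ℂ ℂ {α : Fin 2 →₀ ℤ | ∀ j, -1 ≤ α j} := by
  have hmono : ∀ a b : ℤ, -1 ≤ a → -1 ≤ b →
      (mono2 a b).coeff ∈ Finsupp.supported ℂ ℂ {α : Fin 2 →₀ ℤ | ∀ j, -1 ≤ α j} :=
    fun a b ha hb => Finsupp.single_mem_supported ℂ _ (by simp [Fin.forall_fin_two, ha, hb])
  simp only [pEHM, AddMonoidAlgebra.coeff_neg, AddMonoidAlgebra.coeff_add]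
  apply_rules [neg_mem, add_mem, hmono] <;> norm_num

theorem coeff_pEHM_ee2_neg_one : pEHM.coeff (ee2 (-1) (-1)) = -1 := by
  simp [pEHM, mono2, AddMonoidAlgebra.coeff_single, ee2_eq_ee2_iff]

theorem degS_ee2 (a b : ℤ) : degS (ee2 a b) = a + b := by
  simp [degS, Fin.sum_univ_two]

theorem degS_ee2_neg_one_lt {α : Fin 2 →₀ ℤ} (hα : ∀ j, -1 ≤ α j) (hne : α ≠ ee2 (-1) (-1)) :
    degS (ee2 (-1) (-1)) < degS α := by
  have hα' : α = ee2 (α 0) (α 1) := by ext j; fin_cases j <;> simp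
  rw [hα', ne_eq, ee2_eq_ee2_iff] at hne
  rw [hα', degS_ee2, degS_ee2]
  have := hα 0
  have := hα 1
  omega

theorem ee2_neg_one_mem_support_pEHM : ee2 (-1) (-1) ∈ pEHM.coeff.support := by
  simp [coeff_pEHM_ee2_neg_one]

theorem degS_ee2_neg_one_lt_of_mem_support_pEHM {α : Fin 2 →₀ ℤ} (hα : α ∈ pEHM.coeff.support)
    (hne : α ≠ ee2 (-1) (-1)) : degS (ee2 (-1) (-1)) < degS α :=
  degS_ee2_neg_one_lt ((Finsupp.mem_supported _ _).1 coeff_pEHM_mem_supported hα) hne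

theorem lowDeg_pEHM : lowDeg pEHM = -2 := by
  rw [lowDeg_eq_degS ee2_neg_one_mem_support_pEHM fun α hα => ?_, degS_ee2]
  · norm_num
  · obtain rfl | hne := eq_or_ne α (ee2 (-1) (-1))
    · exact le_rfl
    · exact (degS_ee2_neg_one_lt_of_mem_support_pEHM hα hne).le

theorem lowComp_pEHM : lowComp pEHM = - mono2 (-1) (-1) := by
  rw [lowComp_eq_single ee2_neg_one_mem_support_pEHM
      fun _ => degS_ee2_neg_one_lt_of_mem_support_pEHM,
    coeff_pEHM_ee2_neg_one, mono2, ← AddMonoidAlgebra.single_neg]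

theorem stmt16_general (q : Fin 2 → ℕ) :
    lowComp pEHM = - mono2 (-1) (-1) ∧
    lowDeg pEHM = -2 ∧
    (Nat.Coprime (q 0) (q 1) → PairwiseDistinctH q (lowComp pEHM)) := by
  refine ⟨lowComp_pEHM, lowDeg_pEHM, fun hco n hn n' hn' hne heq => hne ?_⟩
  rw [lowComp_pEHM, mono2, ← AddMonoidAlgebra.single_neg, scaleZ_single, scaleZ_single,
    AddMonoidAlgebra.single_right_inj] at heq
  simp only [Fin.prod_univ_two, ee2_apply_zero, ee2_apply_one, muV, zpow_neg_one, mul_neg_one,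
    neg_inj, ← mul_inv, inv_inj] at heq
  exact muC_mul_muC_injOn_Wcell hco hn hn' heq

theorem stmt16 (q : Fin 2 → ℕ) (hq : ∀ j, 1 ≤ q j) :
    lowComp pEHM = - mono2 (-1) (-1) ∧
    lowDeg pEHM = -2 ∧
    (Nat.Coprime (q 0) (q 1) → PairwiseDistinctH q (lowComp pEHM)) :=
  stmt16_general q
end
end
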